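/- arXiv:2403.04465 — 10 statements merged into one kernel-verified Lean document; each statement's English description precedes it below -/
import Mathlib

section
/- Let ε ≠ 0 be real, let Ω be the 4×4 matrix defined in the context, and let Ω₁, Ω₂ and the constraint equations (E1), (E2) be as in the context. Let A_l, A_r, B be 2×2 complex matrices, and for k ∈ ℝ define the 2×4 matrix A(k) = [A_l | A_r] + i·k·[B | 0] (block notation, each block 2×2). Then A(k)·Ω⁻¹·A(k)* = 0 for all k ∈ ℝ if and only if both (E1) and (E2) hold. -/
open Matrix

/-- The `k_x`-independent form of the self-adjointness constraint: `A(k) Ω⁻¹ A(k)* = 0`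
for all real `k` iff the two constraint equations (E1) and (E2) hold. -/
theorem stmt5 (ε : ℝ) (hε : ε ≠ 0)
    (Ω₁ Ω₂ : Matrix (Fin 2) (Fin 2) ℂ)
    (hΩ₁ : Ω₁ = !![(ε : ℂ), 0; 0, -(ε : ℂ)]) (hΩ₂ : Ω₂ = !![0, -1; 1, 0])
    (Ωinv : Matrix (Fin 2 ⊕ Fin 2) (Fin 2 ⊕ Fin 2) ℂ)
    (hΩinv : Ωinv = ((ε : ℂ) ^ 2)⁻¹ • Matrix.fromBlocks 0 (-Ω₁) Ω₁ Ω₂)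
    (Al Ar B : Matrix (Fin 2) (Fin 2) ℂ)
    (A : ℝ → Matrix (Fin 2) (Fin 2 ⊕ Fin 2) ℂ)
    (hA : ∀ k : ℝ, A k = Matrix.fromCols (Al + (Complex.I * (k : ℂ)) • B) Ar) :
    (∀ k : ℝ, A k * Ωinv * (A k)ᴴ = 0) ↔
      (-(Al * Ω₁ * Arᴴ) + Ar * Ω₁ * Alᴴ + Ar * Ω₂ * Arᴴ = 0 ∧
        B * Ω₁ * Arᴴ + Ar * Ω₁ * Bᴴ = 0) := by
  have hc : ((ε : ℂ) ^ 2)⁻¹ ≠ 0 := by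
    simp [hε]
  have key : ∀ k : ℝ, A k * Ωinv * (A k)ᴴ =
      ((ε : ℂ) ^ 2)⁻¹ •
        ((-(Al * Ω₁ * Arᴴ) + Ar * Ω₁ * Alᴴ + Ar * Ω₂ * Arᴴ) -
          (Complex.I * (k : ℂ)) • (B * Ω₁ * Arᴴ + Ar * Ω₁ * Bᴴ)) := by
    intro k
    rw [hA, hΩinv]
    rw [Matrix.mul_smul, Matrix.smul_mul, fromCols_mul_fromBlocks,
      conjTranspose_fromCols_eq_fromRows_conjTranspose, fromCols_mul_fromRows]
    congr 1
    have hstar : ((Al + (Complex.I * (k : ℂ)) • B))ᴴ =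
        Alᴴ + (-(Complex.I * (k : ℂ))) • Bᴴ := by
      rw [conjTranspose_add, conjTranspose_smul]
      congr 2
      simp [Complex.ext_iff]
    rw [hstar]
    simp only [Matrix.mul_zero, Matrix.zero_mul, smul_zero, zero_add, add_zero, Matrix.mul_neg, Matrix.mul_add,
      Matrix.add_mul, Matrix.neg_mul, Matrix.smul_mul, Matrix.mul_smul, neg_smul,
      smul_add, smul_neg]
    abel
  constructor
  · intro h
    have h0 := h 0
    rw [key 0] at h0
    simp only [Complex.ofReal_zero, mul_zero, zero_smul, sub_zero,
      smul_eq_zero, hc, false_or] at h0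
    refine ⟨h0, ?_⟩
    have h1 := h 1
    rw [key 1, h0] at h1
    simp only [Complex.ofReal_one, mul_one, zero_sub, smul_eq_zero, hc, false_or,
      neg_eq_zero, Complex.I_ne_zero] at h1
    exact h1
  · rintro ⟨h1, h2⟩ k
    rw [key k, h1, h2]
    simp
end

section
/- Let ε > 0 and α ∈ ℂ, and set A_l = [[1, 0],[0, α]] and A_r = [[0, 0],[1, 0]] (the Schubert cell 𝒞_{1,3} form). Then −A_l·Ω₁·A_r* + A_r·Ω₁·A_l* + A_r·Ω₂·A_r* = [[0, −ε],[ε, 0]] ≠ 0. Consequently, for no 2×2 complex matrix B do the constraint equations (E1) and (E2) both hold; i.e., the Schubert class 𝒞_{1,3} contains no self-adjoint boundary condition. -/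
open Matrix

/-- The Schubert class `𝒞_{1,3}` contains no self-adjoint boundary condition. -/
theorem stmt6 (ε : ℝ) (hε : 0 < ε) (α : ℂ)
    (Ω₁ Ω₂ : Matrix (Fin 2) (Fin 2) ℂ)
    (hΩ₁ : Ω₁ = !![(ε : ℂ), 0; 0, -(ε : ℂ)]) (hΩ₂ : Ω₂ = !![0, -1; 1, 0])
    (Al Ar : Matrix (Fin 2) (Fin 2) ℂ)
    (hAl : Al = !![1, 0; 0, α]) (hAr : Ar = !![0, 0; 1, 0]) :
    (-(Al * Ω₁ * Arᴴ) + Ar * Ω₁ * Alᴴ + Ar * Ω₂ * Arᴴ = !![0, -(ε : ℂ); (ε : ℂ), 0]) ∧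
    (!![0, -(ε : ℂ); (ε : ℂ), 0] : Matrix (Fin 2) (Fin 2) ℂ) ≠ 0 ∧
    ∀ B : Matrix (Fin 2) (Fin 2) ℂ,
      ¬(-(Al * Ω₁ * Arᴴ) + Ar * Ω₁ * Alᴴ + Ar * Ω₂ * Arᴴ = 0 ∧
        B * Ω₁ * Arᴴ + Ar * Ω₁ * Bᴴ = 0) := by
  have hεne : (ε : ℂ) ≠ 0 := by exact_mod_cast hε.ne'
  have h1 : -(Al * Ω₁ * Arᴴ) + Ar * Ω₁ * Alᴴ + Ar * Ω₂ * Arᴴ = !![0, -(ε : ℂ); (ε : ℂ), 0] := by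
    subst hΩ₁ hΩ₂ hAl hAr
    ext i j
    fin_cases i <;> fin_cases j <;>
      simp [Matrix.mul_apply, Fin.sum_univ_succ, Matrix.vecMul, dotProduct, Matrix.conjTranspose_apply]
  have h2 : (!![0, -(ε : ℂ); (ε : ℂ), 0] : Matrix (Fin 2) (Fin 2) ℂ) ≠ 0 := by
    intro h
    have := congrFun (congrFun h 1) 0
    simp at this
    exact hε.ne' this
  refine ⟨h1, h2, fun B ⟨hE1, _⟩ => ?_⟩
  rw [h1] at hE1
  exact h2 hE1
end

section
/- Let ε > 0, let a₂₂, a₂₃ ∈ ℂ, let B = (b_{ij}) be a 2×2 complex matrix, and set A_l = [[1, 0],[0, a₂₂]] and A_r = [[0, 0],[a₂₃, 1]] (the Schubert cell 𝒞_{1,4} form). Then the constraint equations (E1) and (E2) both hold if and only if a₂₃ = 0, Im(a₂₂) = 0, b₁₂ = 0, and Re(b₂₂) = 0. (This is the classification of class 𝔄_{1,4} self-adjoint boundary conditions.) -/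
/-!
Both constraint matrices are computed entrywise. The lower-left entry of (E1) is `ε a₂₃`, so
`a₂₃ = 0`, after which its lower-right entry is `ε (a₂₂ - conj a₂₂) = 2iε Im a₂₂`. With `a₂₃ = 0`,
(E2) has entries `-ε b₁₂`, its conjugate, and `-ε (b₂₂ + conj b₂₂) = -2ε Re b₂₂`.
-/

open Matrix ComplexConjugate

theorem Matrix.conjTranspose_fin_two_of {α : Type*} [Star α] (a b c d : α) :
    !![a, b; c, d]ᴴ = !![star a, star c; star b, star d] := by
  ext i j
  fin_cases i <;> fin_cases j <;> rfl

theorem Matrix.of_fin_two_eq_zero_iff {α : Type*} [Zero α] {a b c d : α} :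
    !![a, b; c, d] = 0 ↔ a = 0 ∧ b = 0 ∧ c = 0 ∧ d = 0 := by
  simp [← Matrix.ext_iff, Fin.forall_fin_two, and_assoc]

section SchubertCell14

variable (ε : ℝ) (a c : ℂ) (B : Matrix (Fin 2) (Fin 2) ℂ)

theorem schubertCell14_constraintE1_eq :
    -(!![1, 0; 0, a] * !![(ε : ℂ), 0; 0, -(ε : ℂ)] * !![0, 0; c, 1]ᴴ) +
        !![0, 0; c, 1] * !![(ε : ℂ), 0; 0, -(ε : ℂ)] * !![1, 0; 0, a]ᴴ +
        !![0, 0; c, 1] * !![0, -1; 1, 0] * !![0, 0; c, 1]ᴴ =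
      !![0, -(ε * conj c); ε * c, ε * (a - conj a) + (conj c - c)] := by
  simp only [conjTranspose_fin_two_of, mul_fin_two, neg_of, of_add_of]
  congr 1
  ext i j
  fin_cases i <;> fin_cases j <;> simp <;> ring

theorem schubertCell14_constraintE2_eq :
    B * !![(ε : ℂ), 0; 0, -(ε : ℂ)] * !![0, 0; 0, 1]ᴴ +
        !![0, 0; 0, 1] * !![(ε : ℂ), 0; 0, -(ε : ℂ)] * Bᴴ =
      !![0, -(ε * B 0 1); -(ε * conj (B 0 1)), -(ε * (B 1 1 + conj (B 1 1)))] := by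
  rw [eta_fin_two B]
  simp only [conjTranspose_fin_two_of, mul_fin_two, of_add_of]
  congr 1
  ext i j
  fin_cases i <;> fin_cases j <;> simp <;> ring

variable {ε} (hε : ε ≠ 0)
include hε

theorem schubertCell14_constraintE1_iff :
    -(!![1, 0; 0, a] * !![(ε : ℂ), 0; 0, -(ε : ℂ)] * !![0, 0; c, 1]ᴴ) +
        !![0, 0; c, 1] * !![(ε : ℂ), 0; 0, -(ε : ℂ)] * !![1, 0; 0, a]ᴴ +
        !![0, 0; c, 1] * !![0, -1; 1, 0] * !![0, 0; c, 1]ᴴ = 0 ↔ c = 0 ∧ a.im = 0 := by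
  have hε' : (ε : ℂ) ≠ 0 := Complex.ofReal_ne_zero.mpr hε
  rw [schubertCell14_constraintE1_eq, Matrix.of_fin_two_eq_zero_iff]
  constructor
  · rintro ⟨-, -, hc, ha⟩
    obtain rfl : c = 0 := (mul_eq_zero.mp hc).resolve_left hε'
    simp only [map_zero, sub_zero, add_zero, Complex.sub_conj, mul_eq_zero] at ha
    simpa [hε] using ha
  · rintro ⟨rfl, ha⟩
    simp [Complex.sub_conj, ha]

theorem schubertCell14_constraintE2_iff :
    B * !![(ε : ℂ), 0; 0, -(ε : ℂ)] * !![0, 0; 0, 1]ᴴ +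
        !![0, 0; 0, 1] * !![(ε : ℂ), 0; 0, -(ε : ℂ)] * Bᴴ = 0 ↔
      B 0 1 = 0 ∧ (B 1 1).re = 0 := by
  rw [schubertCell14_constraintE2_eq, Matrix.of_fin_two_eq_zero_iff]
  simp [Complex.add_conj, hε]

end SchubertCell14

/-- Classification of class `𝔄_{1,4}` self-adjoint boundary conditions. -/
theorem stmt7 (ε : ℝ) (hε : 0 < ε) (a₂₂ a₂₃ : ℂ)
    (B : Matrix (Fin 2) (Fin 2) ℂ)
    (Ω₁ Ω₂ : Matrix (Fin 2) (Fin 2) ℂ)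
    (hΩ₁ : Ω₁ = !![(ε : ℂ), 0; 0, -(ε : ℂ)]) (hΩ₂ : Ω₂ = !![0, -1; 1, 0])
    (Al Ar : Matrix (Fin 2) (Fin 2) ℂ)
    (hAl : Al = !![1, 0; 0, a₂₂]) (hAr : Ar = !![0, 0; a₂₃, 1]) :
    (-(Al * Ω₁ * Arᴴ) + Ar * Ω₁ * Alᴴ + Ar * Ω₂ * Arᴴ = 0 ∧
      B * Ω₁ * Arᴴ + Ar * Ω₁ * Bᴴ = 0) ↔
    (a₂₃ = 0 ∧ a₂₂.im = 0 ∧ B 0 1 = 0 ∧ (B 1 1).re = 0) := by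
  subst hΩ₁ hΩ₂ hAl hAr
  rw [schubertCell14_constraintE1_iff a₂₂ a₂₃ hε.ne', and_assoc]
  refine and_congr_right fun ha₂₃ => and_congr_right fun _ => ?_
  subst ha₂₃
  exact schubertCell14_constraintE2_iff B hε.ne'
end

section
/- Let ε > 0, let A_l = (a_{ij}) and B = (b_{ij}) be 2×2 complex matrices, and let A_r = I₂ be the 2×2 identity matrix (the Schubert cell 𝒞_{3,4} form). Then the constraint equations (E1) and (E2) both hold if and only if Im(a₁₁) = 0, Im(a₂₂) = 0, a₂₁ = ε⁻¹ − conj(a₁₂), Re(b₁₁) = 0, Re(b₂₂) = 0, and b₂₁ = conj(b₁₂). (This is the classification of class 𝔄_{3,4} self-adjoint boundary conditions.) -/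
/-!
With `A_r = 1` the matrix of (E1) is skew-Hermitian (`Ω₁` is Hermitian, `Ω₂` skew-Hermitian) and
that of (E2) is Hermitian, so each vanishes iff its diagonal entries and its `(1, 0)` entry do.
Since `Ω₁` is diagonal, these six entries are the six scalar conditions of the classification.
-/

open Matrix

section StarRing

variable {R : Type*} [Ring R] [StarRing R] {ω : R}

theorem IsSelfAdjoint.mul_add_mul_star (hω : IsSelfAdjoint ω) (b : R) :
    IsSelfAdjoint (b * ω + ω * star b) := by
  simpa only [star_mul, hω.star_eq] using IsSelfAdjoint.add_star_self (b * ω)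

theorem IsSelfAdjoint.neg_mul_add_mul_star_add_mem_skewAdjoint (hω : IsSelfAdjoint ω) (a : R)
    {j : R} (hj : j ∈ skewAdjoint R) : -(a * ω) + ω * star a + j ∈ skewAdjoint R := by
  rw [skewAdjoint.mem_iff] at hj ⊢
  simp only [star_add, star_neg, star_mul, star_star, hω.star_eq, hj]
  abel

end StarRing

namespace Matrix

theorem eq_zero_iff_fin_two_of_apply_zero_one {α : Type*} [Zero α] {M : Matrix (Fin 2) (Fin 2) α}
    (h : M 1 0 = 0 → M 0 1 = 0) :
    M = 0 ↔ M 0 0 = 0 ∧ M 1 1 = 0 ∧ M 1 0 = 0 := by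
  refine ⟨fun hM ↦ by simp [hM], fun ⟨h00, h11, h10⟩ ↦ ?_⟩
  ext i j
  fin_cases i <;> fin_cases j
  exacts [h00, h h10, h10, h11]

variable {α : Type*} [AddCommGroup α] [StarAddMonoid α] {M : Matrix (Fin 2) (Fin 2) α}

theorem IsHermitian.eq_zero_iff_fin_two (hM : M.IsHermitian) :
    M = 0 ↔ M 0 0 = 0 ∧ M 1 1 = 0 ∧ M 1 0 = 0 :=
  eq_zero_iff_fin_two_of_apply_zero_one fun h10 ↦ by rw [← hM.apply 0 1, h10, star_zero]

theorem eq_zero_iff_fin_two_of_mem_skewAdjoint (hM : M ∈ skewAdjoint _) :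
    M = 0 ↔ M 0 0 = 0 ∧ M 1 1 = 0 ∧ M 1 0 = 0 :=
  eq_zero_iff_fin_two_of_apply_zero_one fun h10 ↦ by
    rw [← neg_eq_zero, ← neg_apply, ← skewAdjoint.mem_iff.mp hM, star_apply, h10, star_zero]

end Matrix

section Field

variable {K : Type*} [Field K] {c : K} (hc : c ≠ 0) (z w : K)
include hc

theorem mul_add_neg_mul_eq_zero_iff : z * c + -c * w = 0 ↔ z = w := by
  rw [show z * c + -c * w = c * (z - w) by ring, mul_eq_zero, sub_eq_zero, or_iff_right hc]

theorem neg_mul_add_neg_mul_add_one_eq_zero_iff : -(z * c) + -c * w + 1 = 0 ↔ z = c⁻¹ - w := by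
  rw [show -(z * c) + -c * w + 1 = 1 - (z + w) * c by ring, sub_eq_zero, eq_sub_iff_add_eq,
    eq_comm, ← eq_div_iff hc, one_div]

end Field

namespace Complex

variable {c : ℂ} (hc : c ≠ 0) (z : ℂ)
include hc

theorem neg_mul_add_mul_star_eq_zero_iff : -(z * c) + c * star z = 0 ↔ z.im = 0 := by
  rw [show -(z * c) + c * star z = c * (star z - z) by ring, mul_eq_zero, sub_eq_zero,
    or_iff_right hc, star_def, conj_eq_iff_im]

theorem mul_add_mul_star_eq_zero_iff : z * c + c * star z = 0 ↔ z.re = 0 := by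
  rw [show z * c + c * star z = c * (z + star z) by ring, mul_eq_zero, or_iff_right hc, star_def,
    add_conj, ofReal_eq_zero, mul_eq_zero, or_iff_right two_ne_zero]

end Complex

/-- Classification of class `𝔄_{3,4}` self-adjoint boundary conditions. -/
theorem stmt8 (ε : ℝ) (hε : 0 < ε)
    (Al B : Matrix (Fin 2) (Fin 2) ℂ)
    (Ω₁ Ω₂ : Matrix (Fin 2) (Fin 2) ℂ)
    (hΩ₁ : Ω₁ = !![(ε : ℂ), 0; 0, -(ε : ℂ)]) (hΩ₂ : Ω₂ = !![0, -1; 1, 0])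
    (Ar : Matrix (Fin 2) (Fin 2) ℂ) (hAr : Ar = 1) :
    (-(Al * Ω₁ * Arᴴ) + Ar * Ω₁ * Alᴴ + Ar * Ω₂ * Arᴴ = 0 ∧
      B * Ω₁ * Arᴴ + Ar * Ω₁ * Bᴴ = 0) ↔
    ((Al 0 0).im = 0 ∧ (Al 1 1).im = 0 ∧ Al 1 0 = ((ε : ℂ))⁻¹ - (starRingEnd ℂ) (Al 0 1) ∧
      (B 0 0).re = 0 ∧ (B 1 1).re = 0 ∧ B 1 0 = (starRingEnd ℂ) (B 0 1)) := by
  have hε₀ : (ε : ℂ) ≠ 0 := by exact_mod_cast hε.ne'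
  have hε₁ : -(ε : ℂ) ≠ 0 := neg_ne_zero.mpr hε₀
  have hΩ₁_sa : IsSelfAdjoint Ω₁ := by
    rw [hΩ₁, ← diagonal_vec2]
    exact isHermitian_diagonal_of_self_adjoint _ (by ext i; fin_cases i <;> simp)
  have hΩ₂_skew : Ω₂ ∈ skewAdjoint _ := by
    rw [skewAdjoint.mem_iff, hΩ₂]
    ext i j
    fin_cases i <;> fin_cases j <;> simp
  subst hAr
  simp only [← star_eq_conjTranspose, star_one, mul_one, one_mul]
  rw [eq_zero_iff_fin_two_of_mem_skewAdjoint
      (hΩ₁_sa.neg_mul_add_mul_star_add_mem_skewAdjoint Al hΩ₂_skew),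
    IsHermitian.eq_zero_iff_fin_two (hΩ₁_sa.mul_add_mul_star B), hΩ₁, hΩ₂, ← diagonal_vec2]
  simp only [Matrix.add_apply, Matrix.neg_apply, mul_diagonal, diagonal_mul, star_apply, of_apply,
    cons_val', cons_val_zero, cons_val_one, empty_val', cons_val_fin_one, add_zero,
    starRingEnd_apply, Complex.neg_mul_add_mul_star_eq_zero_iff hε₀,
    Complex.neg_mul_add_mul_star_eq_zero_iff hε₁, Complex.mul_add_mul_star_eq_zero_iff hε₀,
    Complex.mul_add_mul_star_eq_zero_iff hε₁, mul_add_neg_mul_eq_zero_iff hε₀,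
    neg_mul_add_neg_mul_add_one_eq_zero_iff hε₀, and_assoc]
end

section
/- Let ε > 0, let a₁, a₂, a₃, a₄ ∈ ℂ and μ ∈ ℂ with μ ≠ 0, and set A_l = [[a₁, a₂],[μa₁, μa₂]], A_r = [[a₃, a₄],[μa₃, μa₄]], and B = [[1, 0],[0, 0]] (the class ℭ form, where A₀ = [A_l | A_r] has rank at most 1). Then the constraint equations (E1) and (E2) both hold if and only if a₃ = 0 and Im(a₂·conj(a₄)) = 0. -/
open Matrix

/-- Classification of class `ℭ` self-adjoint boundary conditions. -/
theorem stmt9 (ε : ℝ) (hε : 0 < ε) (a₁ a₂ a₃ a₄ μ : ℂ) (hμ : μ ≠ 0)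
    (Ω₁ Ω₂ : Matrix (Fin 2) (Fin 2) ℂ)
    (hΩ₁ : Ω₁ = !![(ε : ℂ), 0; 0, -(ε : ℂ)]) (hΩ₂ : Ω₂ = !![0, -1; 1, 0])
    (Al Ar B : Matrix (Fin 2) (Fin 2) ℂ)
    (hAl : Al = !![a₁, a₂; μ * a₁, μ * a₂]) (hAr : Ar = !![a₃, a₄; μ * a₃, μ * a₄])
    (hB : B = !![1, 0; 0, 0]) :
    (-(Al * Ω₁ * Arᴴ) + Ar * Ω₁ * Alᴴ + Ar * Ω₂ * Arᴴ = 0 ∧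
      B * Ω₁ * Arᴴ + Ar * Ω₁ * Bᴴ = 0) ↔
    (a₃ = 0 ∧ (a₂ * (starRingEnd ℂ) a₄).im = 0) := by
  have hε' : (ε : ℂ) ≠ 0 := by exact_mod_cast hε.ne'
  subst hΩ₁ hΩ₂ hAl hAr hB
  rw [← Matrix.ext_iff, ← Matrix.ext_iff]
  simp [Fin.forall_fin_two, Matrix.mul_apply, Fin.sum_univ_two, Matrix.vecMul,
    dotProduct, Matrix.conjTranspose_apply]
  constructor
  · rintro ⟨h1, h2⟩
    obtain h3 : a₃ = 0 := by
      rcases h2.1.2 with h | h | h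
      · exact absurd h (by exact_mod_cast hε.ne')
      · exact absurd h hμ
      · exact h
    subst h3
    refine ⟨rfl, ?_⟩
    have e1 := h1.1.1
    simp only [map_zero, mul_zero, zero_mul, neg_zero, add_zero, zero_add] at e1
    have key : a₂ * (starRingEnd ℂ) a₄ = a₄ * (starRingEnd ℂ) a₂ := by
      have := mul_left_cancel₀ hε' (by linear_combination e1 :
        (ε : ℂ) * (a₂ * (starRingEnd ℂ) a₄) = (ε : ℂ) * (a₄ * (starRingEnd ℂ) a₂))
      exact this
    have := congrArg Complex.im key
    simp [Complex.mul_im, Complex.conj_im, Complex.conj_re] at this ⊢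
    linarith
  · rintro ⟨h3, him⟩
    subst h3
    have key : a₂ * (starRingEnd ℂ) a₄ = a₄ * (starRingEnd ℂ) a₂ := by
      have him' : (a₂ * (starRingEnd ℂ) a₄).im = 0 := by
        simp [Complex.mul_im]; linarith
      have h := (Complex.conj_eq_iff_im).mpr him'
      rw [_root_.map_mul, Complex.conj_conj] at h
      linear_combination -h
    simp only [map_zero, mul_zero, zero_mul, neg_zero, add_zero, zero_add]
    refine ⟨⟨⟨?_, ?_⟩, ?_, ?_⟩, ?_⟩
    · linear_combination (ε : ℂ) * key
    · linear_combination (ε : ℂ) * (starRingEnd ℂ) μ * key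
    · linear_combination μ * (ε : ℂ) * key
    · linear_combination μ * (ε : ℂ) * (starRingEnd ℂ) μ * key
    · tauto
end

section
/- Let λ₀, δ₀, M > 0. Let g₀, R : [−λ₀, λ₀] × (0, δ₀] → ℂ be continuous, continuously differentiable in the first variable, with |g₀(λ_x, δ)| > M for all (λ_x, δ), and suppose R(λ_x, δ) → 0 as (λ_x, δ) → (0, 0). Set g̃ = g₀ + R. Then for every η > 0 there exist λ₁ ∈ (0, λ₀] and δ₁ ∈ (0, δ₀] such that for all 0 < λ ≤ λ₁ and 0 < δ ≤ δ₁, g̃(λ_x, δ) ≠ 0 for all λ_x ∈ [−λ, λ] and | ∫_{−λ}^{λ} ( (∂_{λ_x} g̃)(λ_x, δ)/g̃(λ_x, δ) − (∂_{λ_x} g₀)(λ_x, δ)/g₀(λ_x, δ) ) dλ_x | ≤ η. In particular, in the iterated limit δ → 0⁺ then λ → 0⁺, the winding integrals of g̃ and of g₀ over [−λ, λ] agree. -/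
open Set Filter

/-- A vanishing perturbation `R` of a function `g₀` bounded away from zero does not
change the winding integral over `[-λ, λ]` in the iterated limit `δ → 0⁺`, `λ → 0⁺`. -/
theorem stmt12 (lam0 del0 M : ℝ) (hlam0 : 0 < lam0) (hdel0 : 0 < del0) (hM : 0 < M)
    (g₀ g₀' R R' : ℝ → ℝ → ℂ)
    (hg₀cont : ContinuousOn (fun p : ℝ × ℝ => g₀ p.1 p.2) (Icc (-lam0) lam0 ×ˢ Ioc 0 del0))
    (hRcont : ContinuousOn (fun p : ℝ × ℝ => R p.1 p.2) (Icc (-lam0) lam0 ×ˢ Ioc 0 del0))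
    (hg₀d : ∀ δ ∈ Ioc (0 : ℝ) del0, ∀ x ∈ Icc (-lam0) lam0,
      HasDerivWithinAt (fun t => g₀ t δ) (g₀' x δ) (Icc (-lam0) lam0) x)
    (hg₀'c : ∀ δ ∈ Ioc (0 : ℝ) del0, ContinuousOn (fun x => g₀' x δ) (Icc (-lam0) lam0))
    (hRd : ∀ δ ∈ Ioc (0 : ℝ) del0, ∀ x ∈ Icc (-lam0) lam0,
      HasDerivWithinAt (fun t => R t δ) (R' x δ) (Icc (-lam0) lam0) x)
    (hR'c : ∀ δ ∈ Ioc (0 : ℝ) del0, ContinuousOn (fun x => R' x δ) (Icc (-lam0) lam0))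
    (hbig : ∀ x ∈ Icc (-lam0) lam0, ∀ δ ∈ Ioc (0 : ℝ) del0, M < ‖g₀ x δ‖)
    (hR0 : Tendsto (fun p : ℝ × ℝ => R p.1 p.2)
      (nhdsWithin ((0 : ℝ), (0 : ℝ)) (Icc (-lam0) lam0 ×ˢ Ioc 0 del0)) (nhds 0)) :
    ∀ η > (0 : ℝ), ∃ lam1 ∈ Ioc (0 : ℝ) lam0, ∃ del1 ∈ Ioc (0 : ℝ) del0,
      ∀ lam ∈ Ioc (0 : ℝ) lam1, ∀ δ ∈ Ioc (0 : ℝ) del1,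
        (∀ x ∈ Icc (-lam) lam, g₀ x δ + R x δ ≠ 0) ∧
        ‖∫ x in (-lam)..lam,
            ((g₀' x δ + R' x δ) / (g₀ x δ + R x δ) - g₀' x δ / g₀ x δ)‖ ≤ η := by
  intro η hη
  set ε : ℝ := min (1/2) (η/6) with hεdef
  have hε : 0 < ε := lt_min (by norm_num) (by linarith)
  have hε2 : ε ≤ 1/2 := min_le_left _ _
  have hε3 : ε ≤ η/6 := min_le_right _ _
  -- eventually ‖R‖ < ε * M near (0,0)
  have hev : ∀ᶠ p in nhdsWithin ((0 : ℝ), (0 : ℝ)) (Icc (-lam0) lam0 ×ˢ Ioc 0 del0),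
      dist (R p.1 p.2) 0 < ε * M :=
    Metric.tendsto_nhds.mp hR0 (ε * M) (by positivity)
  obtain ⟨r, hr, hRsmall'⟩ := Metric.mem_nhdsWithin_iff.mp hev
  have hRsmall : ∀ p : ℝ × ℝ, p ∈ Icc (-lam0) lam0 ×ˢ Ioc 0 del0 →
      dist p ((0 : ℝ), (0 : ℝ)) < r → dist (R p.1 p.2) 0 < ε * M := by
    intro p hp hd
    exact hRsmall' ⟨Metric.mem_ball.mpr hd, hp⟩
  refine ⟨min (lam0/2) (r/2), ⟨lt_min (by linarith) (by linarith),
      (min_le_left _ _).trans (by linarith)⟩,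
    min del0 (r/2), ⟨lt_min hdel0 (by linarith), min_le_left _ _⟩, ?_⟩
  intro lam hlam δ hδ
  have hδ0 : δ ∈ Ioc (0 : ℝ) del0 := ⟨hδ.1, hδ.2.trans (min_le_left _ _)⟩
  have hlamlt : lam < lam0 := lt_of_le_of_lt (hlam.2.trans (min_le_left _ _)) (by linarith)
  have hlampos : 0 < lam := hlam.1
  have hsub : Icc (-lam) lam ⊆ Icc (-lam0) lam0 := Icc_subset_Icc (by linarith) (by linarith)
  -- pointwise facts
  have hx0 : ∀ x ∈ Icc (-lam) lam, x ∈ Icc (-lam0) lam0 := fun x hx => hsub hx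
  have hg0ne0 : ∀ x ∈ Icc (-lam0) lam0, g₀ x δ ≠ 0 := by
    intro x hx hc
    have := hbig x hx δ hδ0
    rw [hc] at this; simp at this; linarith
  have hg0ne : ∀ x ∈ Icc (-lam) lam, g₀ x δ ≠ 0 := fun x hx => hg0ne0 x (hsub hx)
  have hRs : ∀ x ∈ Icc (-lam) lam, ‖R x δ‖ < ε * M := by
    intro x hx
    have hmem : ((x, δ) : ℝ × ℝ) ∈ Icc (-lam0) lam0 ×ˢ Ioc 0 del0 := ⟨hx0 x hx, hδ0⟩
    have hd : dist ((x, δ) : ℝ × ℝ) ((0 : ℝ), (0 : ℝ)) < r := by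
      rw [Prod.dist_eq]
      have h1 : dist x 0 < r := by
        rw [Real.dist_eq, sub_zero]
        have := abs_le.mpr ⟨hx.1, hx.2⟩
        have : |x| ≤ lam := this
        have hlr : lam ≤ r/2 := hlam.2.trans (min_le_right _ _)
        linarith
      have h2 : dist δ 0 < r := by
        rw [Real.dist_eq, sub_zero, abs_of_pos hδ.1]
        have := hδ.2.trans (min_le_right _ _)
        linarith
      exact max_lt h1 h2
    simpa [dist_zero_right] using hRsmall (x, δ) hmem hd
  have hfrac : ∀ x ∈ Icc (-lam) lam, ‖R x δ / g₀ x δ‖ < ε := by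
    intro x hx
    have hgM : M < ‖g₀ x δ‖ := hbig x (hx0 x hx) δ hδ0
    rw [norm_div, div_lt_iff₀ (by linarith : (0:ℝ) < ‖g₀ x δ‖)]
    nlinarith [hRs x hx, hε]
  -- h and its properties
  set h : ℝ → ℂ := fun x => 1 + R x δ / g₀ x δ with hhdef
  have hslit : ∀ x ∈ Icc (-lam) lam, h x ∈ Complex.slitPlane := by
    intro x hx
    exact Complex.mem_slitPlane_of_norm_lt_one ((hfrac x hx).trans_le (by linarith))
  have hhne : ∀ x ∈ Icc (-lam) lam, h x ≠ 0 :=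
    fun x hx => Complex.slitPlane_ne_zero (hslit x hx)
  have hfact : ∀ x ∈ Icc (-lam) lam, g₀ x δ + R x δ = g₀ x δ * h x := by
    intro x hx
    have ha := hg0ne x hx
    show g₀ x δ + R x δ = g₀ x δ * (1 + R x δ / g₀ x δ)
    field_simp
  have hgRne : ∀ x ∈ Icc (-lam) lam, g₀ x δ + R x δ ≠ 0 := by
    intro x hx
    rw [hfact x hx]
    exact mul_ne_zero (hg0ne x hx) (hhne x hx)
  refine ⟨hgRne, ?_⟩
  -- log bound
  have hlogb : ∀ x ∈ Icc (-lam) lam, ‖Complex.log (h x)‖ ≤ (3/2) * ε := by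
    intro x hx
    calc ‖Complex.log (h x)‖ ≤ (3/2) * ‖R x δ / g₀ x δ‖ :=
          Complex.norm_log_one_add_half_le_self ((hfrac x hx).le.trans hε2)
      _ ≤ (3/2) * ε := by nlinarith [hfrac x hx, norm_nonneg (R x δ / g₀ x δ)]
  -- derivative of h
  set d : ℝ → ℂ := fun x => (R' x δ * g₀ x δ - R x δ * g₀' x δ) / (g₀ x δ) ^ 2 with hddef
  have hIccnhds : ∀ x ∈ Icc (-lam) lam, Icc (-lam0) lam0 ∈ nhds x := by
    intro x hx
    exact Icc_mem_nhds (by have := hx.1; linarith) (by have := hx.2; linarith)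
  have hd : ∀ x ∈ Icc (-lam) lam, HasDerivAt h (d x) x := by
    intro x hx
    have h1 := ((hRd δ hδ0 x (hx0 x hx)).div (hg₀d δ hδ0 x (hx0 x hx)) (hg0ne x hx)).const_add 1
    exact (h1.hasDerivAt (hIccnhds x hx))
  have hF : ∀ x ∈ Icc (-lam) lam,
      HasDerivAt (fun t => Complex.log (h t)) ((h x)⁻¹ * d x) x := by
    intro x hx
    exact (Complex.hasDerivAt_log (hslit x hx)).comp x (hd x hx)
  -- continuity pieces
  have hmapsTo : MapsTo (fun x : ℝ => ((x, δ) : ℝ × ℝ)) (Icc (-lam0) lam0)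
      (Icc (-lam0) lam0 ×ˢ Ioc 0 del0) := fun x hx => ⟨hx, hδ0⟩
  have hcx : Continuous (fun x : ℝ => ((x, δ) : ℝ × ℝ)) := by fun_prop
  have hg0c : ContinuousOn (fun x => g₀ x δ) (Icc (-lam0) lam0) :=
    hg₀cont.comp hcx.continuousOn hmapsTo
  have hRc : ContinuousOn (fun x => R x δ) (Icc (-lam0) lam0) :=
    hRcont.comp hcx.continuousOn hmapsTo
  have hhc : ContinuousOn h (Icc (-lam) lam) := by
    apply ContinuousOn.mono (s := Icc (-lam0) lam0) ?_ hsub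
    exact continuousOn_const.add (hRc.div hg0c hg0ne0)
  have hdc : ContinuousOn d (Icc (-lam) lam) := by
    apply ContinuousOn.mono (s := Icc (-lam0) lam0) ?_ hsub
    apply ContinuousOn.div
    · exact ((hR'c δ hδ0).mul hg0c).sub (hRc.mul (hg₀'c δ hδ0))
    · exact hg0c.pow 2
    · intro x hx hc
      exact hg0ne0 x hx (pow_eq_zero_iff two_ne_zero |>.mp hc)
  have hint : IntervalIntegrable (fun x => (h x)⁻¹ * d x) MeasureTheory.volume (-lam) lam := by
    apply ContinuousOn.intervalIntegrable
    rw [uIcc_of_le (by linarith)]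
    exact (hhc.inv₀ hhne).mul hdc
  -- FTC
  have hFTC : ∫ x in (-lam)..lam, (h x)⁻¹ * d x
      = Complex.log (h lam) - Complex.log (h (-lam)) := by
    apply intervalIntegral.integral_eq_sub_of_hasDerivAt
    · intro x hx
      rw [uIcc_of_le (by linarith)] at hx
      exact hF x hx
    · exact hint
  -- integrand identity
  have hcongr : ∫ x in (-lam)..lam,
      ((g₀' x δ + R' x δ) / (g₀ x δ + R x δ) - g₀' x δ / g₀ x δ)
      = ∫ x in (-lam)..lam, (h x)⁻¹ * d x := by
    apply intervalIntegral.integral_congr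
    intro x hx
    rw [uIcc_of_le (by linarith)] at hx
    have ha := hg0ne x hx
    have hc : (1 : ℂ) + R x δ / g₀ x δ ≠ 0 := hhne x hx
    have hb : g₀ x δ + R x δ ≠ 0 := hgRne x hx
    have key : (h x)⁻¹ * d x
        = (g₀' x δ + R' x δ) / (g₀ x δ + R x δ) - g₀' x δ / g₀ x δ := by
      rw [hfact x hx]
      show (1 + R x δ / g₀ x δ)⁻¹ * ((R' x δ * g₀ x δ - R x δ * g₀' x δ) / g₀ x δ ^ 2)
        = (g₀' x δ + R' x δ) / (g₀ x δ * (1 + R x δ / g₀ x δ)) - g₀' x δ / g₀ x δ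
      field_simp [ha, hb, hc]
      ring
    exact key.symm
  rw [hcongr, hFTC]
  have hmem1 : lam ∈ Icc (-lam) lam := by constructor <;> linarith
  have hmem2 : -lam ∈ Icc (-lam) lam := by constructor <;> linarith
  calc ‖Complex.log (h lam) - Complex.log (h (-lam))‖
      ≤ ‖Complex.log (h lam)‖ + ‖Complex.log (h (-lam))‖ := by
        exact norm_sub_le _ _
    _ ≤ (3/2) * ε + (3/2) * ε := add_le_add (hlogb lam hmem1) (hlogb (-lam) hmem2)
    _ ≤ η := by linarith
end

section
/- Let β ∈ ℝ with β ≠ 0, and define 𝒮 : ℝ → ℂ by 𝒮(u) = (βu − i)/(βu + i). Then 𝒮(u) ≠ 0 for every u ∈ ℝ, 𝒮 is differentiable, and lim_{T→∞} ∫_{−T}^{T} 𝒮'(u)/𝒮(u) du = 2πi·sign(β). (In particular, the asymptotic winding number of the class 𝔄_{1,4} boundary conditions with β ≠ 0 is w_∞ = sign(β).) -/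
/-!
The Cayley transform `x ↦ (x - i)/(x + i)` has logarithmic derivative `2i/(1 + x²)`, so the
logarithmic derivative of `u ↦ 𝒮(u)` has primitive `2i · arctan (βu)`. The winding integral over
`[-T, T]` is therefore `4i · arctan (βT)`, which tends to `4i · sign β · π/2`.
-/

open Filter Real

namespace Complex

lemma ofReal_add_I_ne_zero (x : ℝ) : (x : ℂ) + I ≠ 0 := fun h => by
  simpa using congrArg im h

lemma ofReal_sub_I_ne_zero (x : ℝ) : (x : ℂ) - I ≠ 0 := fun h => by
  simpa using congrArg im h

noncomputable def cayley (x : ℝ) : ℂ := (x - I) / (x + I)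

lemma cayley_ne_zero (x : ℝ) : cayley x ≠ 0 :=
  div_ne_zero (ofReal_sub_I_ne_zero x) (ofReal_add_I_ne_zero x)

lemma hasDerivAt_cayley (x : ℝ) : HasDerivAt cayley (2 * I / (x + I) ^ 2) x := by
  have h := ((hasDerivAt_id x).ofReal_comp.sub_const I).div
    ((hasDerivAt_id x).ofReal_comp.add_const I) (ofReal_add_I_ne_zero x)
  refine h.congr_deriv ?_
  simp only [id, ofReal_one]
  ring

lemma hasDerivAt_cayley_const_mul (β u : ℝ) :
    HasDerivAt (fun u => cayley (β * u)) (β * (2 * I / ((β * u : ℝ) + I) ^ 2)) u := by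
  have h := (hasDerivAt_cayley (β * u)).scomp u ((hasDerivAt_id u).const_mul β)
  simpa [Function.comp_def] using h

lemma logDeriv_cayley_const_mul (β u : ℝ) :
    logDeriv (fun u => cayley (β * u)) u = 2 * I * β / (1 + (β * u : ℝ) ^ 2) := by
  have hplus := ofReal_add_I_ne_zero (β * u)
  have hminus := ofReal_sub_I_ne_zero (β * u)
  have hprod : ((β * u : ℝ) + I) * ((β * u : ℝ) - I) = 1 + (β * u : ℝ) ^ 2 := by
    linear_combination -I_sq
  rw [logDeriv_apply, (hasDerivAt_cayley_const_mul β u).deriv, cayley, ← hprod]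
  field_simp

lemma hasDerivAt_two_I_mul_arctan (β u : ℝ) :
    HasDerivAt (fun u => 2 * I * (Real.arctan (β * u) : ℂ))
      (logDeriv (fun u => cayley (β * u)) u) u := by
  have h : HasDerivAt (fun u => Real.arctan (β * u)) (1 / (1 + (β * u) ^ 2) * β) u := by
    simpa using ((hasDerivAt_id u).const_mul β).arctan
  refine (h.ofReal_comp.const_mul (2 * I)).congr_deriv ?_
  rw [logDeriv_cayley_const_mul]
  push_cast
  ring

lemma integral_logDeriv_cayley_const_mul (β T : ℝ) :
    ∫ u in (-T)..T, logDeriv (fun u => cayley (β * u)) u = 4 * I * (Real.arctan (β * T) : ℂ) := by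
  have hcont : Continuous (logDeriv fun u => cayley (β * u)) := by
    simp only [funext (logDeriv_cayley_const_mul β)]
    refine continuous_const.div (by fun_prop) fun u => ?_
    exact_mod_cast (by positivity : (1 + (β * u) ^ 2 : ℝ) ≠ 0)
  rw [intervalIntegral.integral_eq_sub_of_hasDerivAt
    (fun u _ => hasDerivAt_two_I_mul_arctan β u) (hcont.intervalIntegrable _ _)]
  simp only [mul_neg, arctan_neg, ofReal_neg]
  ring

end Complex

lemma Real.tendsto_arctan_const_mul_atTop (β : ℝ) :
    Tendsto (fun T => arctan (β * T)) atTop (nhds (Real.sign β * (π / 2))) := by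
  rcases lt_trichotomy β 0 with hβ | rfl | hβ
  · simpa [Real.sign_of_neg hβ, Function.comp_def] using
      (tendsto_arctan_atBot.mono_right nhdsWithin_le_nhds).comp
        (tendsto_id.const_mul_atTop_of_neg hβ)
  · simp
  · simpa [Real.sign_of_pos hβ, Function.comp_def] using
      (tendsto_arctan_atTop.mono_right nhdsWithin_le_nhds).comp (tendsto_id.const_mul_atTop hβ)

open Complex in
theorem stmt16_general (β : ℝ)
    (S : ℝ → ℂ) (hS : S = fun u : ℝ => (((β * u : ℝ) : ℂ) - Complex.I) / (((β * u : ℝ) : ℂ) + Complex.I)) :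
    (∀ u : ℝ, S u ≠ 0) ∧ Differentiable ℝ S ∧
      Tendsto (fun T : ℝ => ∫ u in (-T)..T, deriv S u / S u) atTop
        (nhds (2 * Real.pi * Complex.I * ((Real.sign β : ℝ) : ℂ))) := by
  change S = fun u => cayley (β * u) at hS
  subst hS
  refine ⟨fun u => cayley_ne_zero _, fun u => (hasDerivAt_cayley_const_mul β u).differentiableAt,
    ?_⟩
  have hlim := ((continuous_ofReal.tendsto _).comp
    (Real.tendsto_arctan_const_mul_atTop β)).const_mul (4 * I)
  simp only [← logDeriv_apply, integral_logDeriv_cayley_const_mul]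
  convert hlim using 2
  · rfl
  · push_cast
    ring

/-- Total winding of `𝒮(u) = (βu − i)/(βu + i)` equals `2πi·sign(β)`:
the anomaly of class `𝔄_{1,4}` boundary conditions. -/
theorem stmt16 (β : ℝ) (hβ : β ≠ 0)
    (S : ℝ → ℂ) (hS : S = fun u : ℝ => (((β * u : ℝ) : ℂ) - Complex.I) / (((β * u : ℝ) : ℂ) + Complex.I)) :
    (∀ u : ℝ, S u ≠ 0) ∧ Differentiable ℝ S ∧
      Tendsto (fun T : ℝ => ∫ u in (-T)..T, deriv S u / S u) atTop
        (nhds (2 * Real.pi * Complex.I * ((Real.sign β : ℝ) : ℂ))) :=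
  stmt16_general β S hS
end

section
/- Let c > 0 and β ∈ ℝ, and define G : ℝ → ℂ by G(u) = βcu + √(1 + 2u²) − ic, and 𝒮(u) = G(u)/conj(G(u)). Then G never vanishes, 𝒮 is differentiable and nowhere vanishing, and: if βc > √2 then lim_{T→∞} ∫_{−T}^{T} 𝒮'(u)/𝒮(u) du = 2πi; if βc < −√2 then this limit equals −2πi; and if |βc| < √2 then this limit equals 0. (With c = |a₁₁|², this gives the asymptotic winding number w_∞ ∈ {1, −1, 0} for the class 𝔄_{2,4} boundary conditions.) -/
/-!
Write `G = f - i c` with `f` real. The logarithmic derivative of `S = G / conj G` is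
`G'/G - conj (G'/G) = 2 i Im (G'/G) = 2 i c f' / (f² + c²)`, the derivative of
`2 i arctan (f / c)`.
Hence `∫_{-T}^{T} S'/S = 2 i (arctan (f T / c) - arctan (f (-T) / c))`, and the winding is decided
by the signs of `f = βc u + √(1 + 2u²)` at `±∞`, that is of `βc ± √2`,
since `√(1 + 2u²) = √2 |u| + O(1)`.
-/

open Filter Real Topology ComplexConjugate
open Complex (I)

section DivConj

variable {G : ℝ → ℂ} {u : ℝ}

theorem differentiable_div_conj (hG : Differentiable ℝ G) (h0 : ∀ u, G u ≠ 0) :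
    Differentiable ℝ (fun u => G u / conj (G u)) :=
  hG.div hG.star fun u => (map_ne_zero _).mpr (h0 u)

theorem logDeriv_div_conj (hG : DifferentiableAt ℝ G u) (h0 : G u ≠ 0) :
    logDeriv (fun u => G u / conj (G u)) u = 2 * I * (logDeriv G u).im := by
  rw [logDeriv_div (f := G) (g := fun u => conj (G u)) u h0 ((map_ne_zero _).mpr h0) hG hG.star]
  simp only [logDeriv_apply, starRingEnd_apply, deriv.star, ← star_div₀]
  rw [← starRingEnd_apply, Complex.sub_conj]
  push_cast
  ring

end DivConj

section Reflection

variable {f f' : ℝ → ℝ} {c u : ℝ}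

theorem ofReal_sub_I_mul_ne_zero (x : ℝ) (hc : c ≠ 0) : (x : ℂ) - I * c ≠ 0 := by
  intro h
  simpa [hc] using congrArg Complex.im h

theorem im_logDeriv_ofReal_sub_I_mul (hf : HasDerivAt f (f' u) u) :
    (logDeriv (fun u => (f u : ℂ) - I * c) u).im = c * f' u / (f u ^ 2 + c ^ 2) := by
  rw [logDeriv_apply, (hf.ofReal_comp.sub_const _).deriv]
  simp [Complex.div_im, Complex.normSq_apply]
  ring

theorem hasDerivAt_arctan_div (hf : HasDerivAt f (f' u) u) (hc : c ≠ 0) :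
    HasDerivAt (fun u => arctan (f u / c)) (c * f' u / (f u ^ 2 + c ^ 2)) u := by
  convert (hf.div_const c).arctan using 1
  field_simp
  ring

theorem integral_logDeriv_div_conj_ofReal_sub_I_mul (hf : ∀ u, HasDerivAt f (f' u) u)
    (hf' : Continuous f') (hc : c ≠ 0) (a b : ℝ) :
    ∫ u in a..b, logDeriv (fun u => ((f u : ℂ) - I * c) / conj ((f u : ℂ) - I * c)) u
      = 2 * I * (arctan (f b / c) - arctan (f a / c)) := by
  have hlog : ∀ u, logDeriv (fun u => ((f u : ℂ) - I * c) / conj ((f u : ℂ) - I * c)) u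
      = 2 * I * ((c * f' u / (f u ^ 2 + c ^ 2) : ℝ) : ℂ) := fun u => by
    rw [logDeriv_div_conj ((hf u).ofReal_comp.sub_const _).differentiableAt
      (ofReal_sub_I_mul_ne_zero _ hc), im_logDeriv_ofReal_sub_I_mul (hf u)]
  have hfc : Continuous f := continuous_iff_continuousAt.2 fun u => (hf u).continuousAt
  have hcont : Continuous fun u => c * f' u / (f u ^ 2 + c ^ 2) :=
    (continuous_const.mul hf').div (by fun_prop) fun u => by positivity
  simp only [hlog, intervalIntegral.integral_const_mul, intervalIntegral.integral_ofReal,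
    intervalIntegral.integral_eq_sub_of_hasDerivAt (fun u _ => hasDerivAt_arctan_div (hf u) hc)
      (hcont.intervalIntegrable a b)]
  push_cast
  ring

theorem tendsto_integral_logDeriv_div_conj_ofReal_sub_I_mul (hf : ∀ u, HasDerivAt f (f' u) u)
    (hf' : Continuous f') (hc : c ≠ 0) {x y : ℝ}
    (hx : Tendsto (fun u => arctan (f u / c)) atTop (𝓝 x))
    (hy : Tendsto (fun u => arctan (f u / c)) atBot (𝓝 y)) :
    Tendsto (fun T => ∫ u in (-T)..T,
        logDeriv (fun u => ((f u : ℂ) - I * c) / conj ((f u : ℂ) - I * c)) u)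
      atTop (𝓝 (2 * I * (x - y))) := by
  simp only [integral_logDeriv_div_conj_ofReal_sub_I_mul hf hf' hc]
  have := (Complex.continuous_ofReal.tendsto _).comp (hx.sub (hy.comp tendsto_neg_atTop_atBot))
  simpa using this.const_mul (2 * I)

theorem tendsto_arctan_div_const_of_tendsto_atTop {α : Type*} {l : Filter α} {g : α → ℝ}
    (hc : 0 < c) (hg : Tendsto g l atTop) :
    Tendsto (fun t => arctan (g t / c)) l (𝓝 (π / 2)) :=
  (tendsto_arctan_atTop.mono_right nhdsWithin_le_nhds).comp (hg.atTop_div_const hc)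

theorem tendsto_arctan_div_const_of_tendsto_atBot {α : Type*} {l : Filter α} {g : α → ℝ}
    (hc : 0 < c) (hg : Tendsto g l atBot) :
    Tendsto (fun t => arctan (g t / c)) l (𝓝 (-(π / 2))) :=
  (tendsto_arctan_atBot.mono_right nhdsWithin_le_nhds).comp (hg.atBot_div_const hc)

end Reflection

section SqrtProfile

variable {a : ℝ}

theorem hasDerivAt_mul_add_sqrt_one_add_two_mul_sq (a u : ℝ) :
    HasDerivAt (fun u => a * u + √(1 + 2 * u ^ 2)) (a + 2 * u / √(1 + 2 * u ^ 2)) u := by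
  have hq : HasDerivAt (fun u : ℝ => 1 + 2 * u ^ 2) (4 * u) u := by
    refine (((hasDerivAt_pow 2 u).const_mul 2).const_add 1).congr_deriv ?_
    push_cast
    ring
  refine (((hasDerivAt_id' u).const_mul a).add (hq.sqrt (by positivity))).congr_deriv ?_
  field_simp
  ring

theorem sqrt_two_mul_abs_le_sqrt_one_add_two_mul_sq (u : ℝ) :
    √2 * |u| ≤ √(1 + 2 * u ^ 2) := by
  rw [← sqrt_sq_eq_abs, ← Real.sqrt_mul zero_le_two]
  exact Real.sqrt_le_sqrt (by linarith)

theorem sqrt_one_add_two_mul_sq_le (u : ℝ) : √(1 + 2 * u ^ 2) ≤ 1 + √2 * |u| := by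
  rw [Real.sqrt_le_left (by positivity)]
  nlinarith [sq_sqrt (zero_le_two (α := ℝ)), sq_abs u, sqrt_nonneg 2, abs_nonneg u]

theorem tendsto_mul_add_sqrt_one_add_two_mul_sq_atTop_atTop (ha : -√2 < a) :
    Tendsto (fun u => a * u + √(1 + 2 * u ^ 2)) atTop atTop := by
  refine tendsto_atTop_mono (fun u => ?_) (tendsto_id.const_mul_atTop (by linarith : 0 < a + √2))
  have := sqrt_two_mul_abs_le_sqrt_one_add_two_mul_sq u
  have := mul_le_mul_of_nonneg_left (le_abs_self u) (sqrt_nonneg 2)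
  simp only [id]
  linarith

theorem tendsto_mul_add_sqrt_one_add_two_mul_sq_atTop_atBot (ha : a < -√2) :
    Tendsto (fun u => a * u + √(1 + 2 * u ^ 2)) atTop atBot := by
  have hlin : Tendsto (fun u => (a + √2) * u + 1) atTop atBot :=
    tendsto_atBot_add_const_right _ 1 (tendsto_id.const_mul_atTop_of_neg (by linarith))
  refine tendsto_atBot_mono' _ ?_ hlin
  filter_upwards [eventually_ge_atTop 0] with u hu
  have := sqrt_one_add_two_mul_sq_le u
  rw [abs_of_nonneg hu] at this
  linarith

theorem tendsto_mul_add_sqrt_one_add_two_mul_sq_atBot_atTop (ha : a < √2) :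
    Tendsto (fun u => a * u + √(1 + 2 * u ^ 2)) atBot atTop := by
  convert (tendsto_mul_add_sqrt_one_add_two_mul_sq_atTop_atTop (a := -a) (by linarith)).comp
    tendsto_neg_atBot_atTop using 2 with u
  simp

theorem tendsto_mul_add_sqrt_one_add_two_mul_sq_atBot_atBot (ha : √2 < a) :
    Tendsto (fun u => a * u + √(1 + 2 * u ^ 2)) atBot atBot := by
  convert (tendsto_mul_add_sqrt_one_add_two_mul_sq_atTop_atBot (a := -a) (by linarith)).comp
    tendsto_neg_atBot_atTop using 2 with u
  simp

end SqrtProfile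

/-- Total winding for class `𝔄_{2,4}`: with `G(u) = βcu + √(1 + 2u²) − ic` and
`𝒮 = G/conj G`, the winding number is `1`, `−1` or `0` according to the position of
`βc` relative to `±√2`. -/
theorem stmt17 (c β : ℝ) (hc : 0 < c)
    (G : ℝ → ℂ)
    (hG : G = fun u : ℝ => ((β * c * u + Real.sqrt (1 + 2 * u ^ 2) : ℝ) : ℂ) - Complex.I * (c : ℂ))
    (S : ℝ → ℂ) (hS : S = fun u => G u / (starRingEnd ℂ) (G u)) :
    (∀ u : ℝ, G u ≠ 0) ∧ Differentiable ℝ S ∧ (∀ u : ℝ, S u ≠ 0) ∧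
    (β * c > Real.sqrt 2 →
      Tendsto (fun T : ℝ => ∫ u in (-T)..T, deriv S u / S u) atTop
        (nhds (2 * Real.pi * Complex.I))) ∧
    (β * c < -Real.sqrt 2 →
      Tendsto (fun T : ℝ => ∫ u in (-T)..T, deriv S u / S u) atTop
        (nhds (-(2 * Real.pi * Complex.I)))) ∧
    (|β * c| < Real.sqrt 2 →
      Tendsto (fun T : ℝ => ∫ u in (-T)..T, deriv S u / S u) atTop (nhds 0)) := by
  subst hG hS
  have hf := hasDerivAt_mul_add_sqrt_one_add_two_mul_sq (β * c)
  have hf' : Continuous fun u : ℝ => β * c + 2 * u / √(1 + 2 * u ^ 2) :=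
    continuous_const.add (by fun_prop (disch := exact fun u => by positivity))
  have hG0 (u : ℝ) : ((β * c * u + √(1 + 2 * u ^ 2) : ℝ) : ℂ) - I * c ≠ 0 :=
    ofReal_sub_I_mul_ne_zero _ hc.ne'
  have winding {x y : ℝ} :=
    tendsto_integral_logDeriv_div_conj_ofReal_sub_I_mul (x := x) (y := y) hf hf' hc.ne'
  simp only [logDeriv_apply] at winding
  have hGd (u : ℝ) := ((hf u).ofReal_comp.sub_const ((I : ℂ) * c)).differentiableAt
  refine ⟨hG0, differentiable_div_conj hGd hG0,
    fun u => div_ne_zero (hG0 u) ((map_ne_zero _).mpr (hG0 u)), fun h => ?_, fun h => ?_,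
    fun h => ?_⟩
  · convert winding (tendsto_arctan_div_const_of_tendsto_atTop hc
      (tendsto_mul_add_sqrt_one_add_two_mul_sq_atTop_atTop (by linarith [sqrt_nonneg 2])))
      (tendsto_arctan_div_const_of_tendsto_atBot hc
      (tendsto_mul_add_sqrt_one_add_two_mul_sq_atBot_atBot h)) using 2
    push_cast
    ring
  · convert winding (tendsto_arctan_div_const_of_tendsto_atBot hc
      (tendsto_mul_add_sqrt_one_add_two_mul_sq_atTop_atBot h))
      (tendsto_arctan_div_const_of_tendsto_atTop hc
      (tendsto_mul_add_sqrt_one_add_two_mul_sq_atBot_atTop (by linarith [sqrt_nonneg 2]))) using 2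
    push_cast
    ring
  · obtain ⟨h₁, h₂⟩ := abs_lt.mp h
    convert winding (tendsto_arctan_div_const_of_tendsto_atTop hc
      (tendsto_mul_add_sqrt_one_add_two_mul_sq_atTop_atTop h₁))
      (tendsto_arctan_div_const_of_tendsto_atTop hc
      (tendsto_mul_add_sqrt_one_add_two_mul_sq_atBot_atTop h₂)) using 2
    ring
end

section
/- Let β₁, β₂ ∈ ℝ and c > 0. Set d = −β₁β₂ − c, B₊ = β₂(β₁ + √2) + c, B₋ = β₂(β₁ − √2) + c, and define G : ℝ → ℂ by G(u) = d·u² + β₂·u·√(2u² + 1) + i·(β₁·u − √(2u² + 1)). Assume B₊ ≠ 0 and B₋ ≠ 0. Then G never vanishes on ℝ, and with 𝒮(u) = G(u)/conj(G(u)) one has lim_{T→∞} ∫_{−T}^{T} 𝒮'(u)/𝒮(u) du = 2πi·w, where: w = sign(B₊) if B₊·B₋ < 0; w = 0 if B₊ > 0 and B₋ > 0; and w = 2·sign(√2 − β₁) if B₊ < 0 and B₋ < 0 (in which case β₁² > 2, so the sign is well defined). In particular, a ghost charge w_∞ = ±2 occurs precisely when B₊ < 0 and B₋ < 0. -/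
/-!
Write `P u = 1 + i β₂ u` and `Q = -G / P`. Then `Re Q u = c u² / |P u|²`, and `Q 0 = i`, so both
`P` and `Q` stay in the slit plane and `log P + log Q` is a `C¹` logarithm of `-G`. Hence
`G / conj G = exp (2 i (arg P + arg Q))`, and the integral over `[-T, T]` is `2 i` times the
increment of the continuous argument `arg P + arg Q`. As `T → ∞`, `P (±T) ~ ± i β₂ T` and
`G (±T) ~ -B∓ T²`, which gives the limits of `arg P (±T)` and `arg Q (±T)`, all in `{0, ±π/2}`;
the winding number is `sign β₂ · (2 - sign B₊ - sign B₋) / 2`.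
-/

open Filter Topology Complex ComplexConjugate
open scoped Real

theorem integral_deriv_div_self_of_eq_cexp {M : ℝ → ℂ} (hM : ContDiff ℝ 1 M) (a b : ℝ) :
    ∫ u in a..b, deriv (fun u => exp (M u)) u / exp (M u) = M b - M a := by
  have hdiff : Differentiable ℝ M := hM.differentiable one_ne_zero
  have hlogDeriv : ∀ u, deriv (fun u => exp (M u)) u / exp (M u) = deriv M u := fun u => by
    rw [(hdiff u).hasDerivAt.cexp.deriv, mul_div_cancel_left₀ _ (exp_ne_zero _)]
  simp only [hlogDeriv]
  exact intervalIntegral.integral_deriv_eq_sub (fun u _ => hdiff u)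
    ((hM.continuous_deriv le_rfl).intervalIntegrable _ _)

theorem integral_deriv_div_self_of_eq_div_conj {F L S : ℝ → ℂ} (hL : ContDiff ℝ 1 L)
    (hF : ∀ u, F u = exp (L u)) (hS : S = fun u => F u / conj (F u)) (a b : ℝ) :
    ∫ u in a..b, deriv S u / S u = 2 * I * ((L b).im - (L a).im) := by
  have hS' : S = fun u => exp (L u - conj (L u)) := by
    simp only [hS, hF, exp_sub, exp_conj]
  have hM : ContDiff ℝ 1 fun u => L u - conj (L u) := hL.sub (conjCLE.contDiff.comp hL)
  rw [hS', integral_deriv_div_self_of_eq_cexp hM, sub_conj, sub_conj]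
  push_cast
  ring

theorem ContDiff.clog_real {f : ℝ → ℂ} {n : WithTop ℕ∞} (hf : ContDiff ℝ n f)
    (h : ∀ u, f u ∈ slitPlane) : ContDiff ℝ n fun u => Complex.log (f u) :=
  contDiff_iff_contDiffAt.2 fun u =>
    ((contDiffAt_log (h u)).restrict_scalars ℝ).comp u hf.contDiffAt

theorem Real.sign_mul (x y : ℝ) : Real.sign (x * y) = Real.sign x * Real.sign y := by
  rcases lt_trichotomy x 0 with hx | rfl | hx <;> rcases lt_trichotomy y 0 with hy | rfl | hy <;>
    simp [Real.sign_of_pos, Real.sign_of_neg, Real.sign_zero, *, mul_pos_of_neg_of_neg,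
      mul_neg_of_pos_of_neg, mul_neg_of_neg_of_pos]

theorem Complex.arg_ofReal_mul_I (x : ℝ) : arg (x * I) = Real.sign x * (π / 2) := by
  rcases lt_trichotomy x 0 with hx | rfl | hx
  · rw [show (x : ℂ) * I = ((-x : ℝ) : ℂ) * -I by push_cast; ring,
      arg_real_mul _ (neg_pos.2 hx), arg_neg_I, Real.sign_of_neg hx]
    ring
  · simp [Real.sign_zero]
  · rw [arg_real_mul _ hx, arg_I, Real.sign_of_pos hx, one_mul]

theorem Complex.tendsto_arg_of_tendsto_div_ofReal {α : Type*} {l : Filter α} {f : α → ℂ}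
    {g : α → ℝ} {z : ℂ} (hz : z ∈ slitPlane) (hg : ∀ᶠ x in l, 0 < g x)
    (h : Tendsto (fun x => f x / g x) l (𝓝 z)) : Tendsto (fun x => arg (f x)) l (𝓝 (arg z)) := by
  refine ((continuousAt_arg hz).tendsto.comp h).congr' ?_
  filter_upwards [hg] with x hx
  rw [Function.comp_apply, div_eq_mul_inv, mul_comm, ← ofReal_inv, arg_real_mul _ (inv_pos.2 hx)]

theorem tendsto_sqrt_two_mul_sq_add_one_div :
    Tendsto (fun T : ℝ => √(2 * T ^ 2 + 1) / T) atTop (𝓝 (√2)) := by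
  have h : Tendsto (fun T : ℝ => √(2 + (T⁻¹) ^ 2)) atTop (𝓝 (√(2 + 0 ^ 2))) :=
    (Real.continuous_sqrt.tendsto _).comp
      ((tendsto_inv_atTop_zero.pow 2).const_add 2)
  rw [zero_pow two_ne_zero, add_zero] at h
  refine h.congr' ?_
  filter_upwards [eventually_gt_atTop 0] with T hT
  rw [show 2 * T ^ 2 + 1 = T ^ 2 * (2 + T⁻¹ ^ 2) by field_simp,
    Real.sqrt_mul (sq_nonneg T), Real.sqrt_sq hT.le, mul_div_cancel_left₀ _ hT.ne']

namespace BoundaryWinding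

noncomputable def G (a b d u : ℝ) : ℂ :=
  ((d * u ^ 2 + b * u * √(2 * u ^ 2 + 1) : ℝ) : ℂ) + I * ((a * u - √(2 * u ^ 2 + 1) : ℝ) : ℂ)

noncomputable def P (b u : ℝ) : ℂ := 1 + ((b * u : ℝ) : ℂ) * I

noncomputable def Q (a b d u : ℝ) : ℂ := -G a b d u / P b u

variable {a b d : ℝ}

@[simp] lemma G_re (u : ℝ) : (G a b d u).re = d * u ^ 2 + b * u * √(2 * u ^ 2 + 1) := by
  simp [G, -ofReal_pow]

@[simp] lemma G_im (u : ℝ) : (G a b d u).im = a * u - √(2 * u ^ 2 + 1) := by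
  simp [G, -ofReal_pow]

@[simp] lemma P_re (u : ℝ) : (P b u).re = 1 := by simp [P]

@[simp] lemma P_im (u : ℝ) : (P b u).im = b * u := by simp [P]

lemma P_mem_slitPlane (u : ℝ) : P b u ∈ slitPlane := by
  simp [mem_slitPlane_iff]

lemma P_ne_zero (u : ℝ) : P b u ≠ 0 := slitPlane_ne_zero (P_mem_slitPlane u)

lemma G_eq_neg_P_mul_Q (u : ℝ) : G a b d u = -(P b u * Q a b d u) := by
  rw [Q, mul_div_cancel₀ _ (P_ne_zero u), neg_neg]

lemma Q_re (u : ℝ) : (Q a b d u).re = (-a * b - d) * u ^ 2 / normSq (P b u) := by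
  simp only [Q, div_re, neg_re, neg_im, G_re, G_im, P_re, P_im]
  ring

lemma Q_zero : Q a b d 0 = I := by
  simp [Q, G, P]

lemma Q_mem_slitPlane (hd : d < -a * b) (u : ℝ) : Q a b d u ∈ slitPlane := by
  rcases eq_or_ne u 0 with rfl | hu
  · simp [Q_zero, mem_slitPlane_iff]
  · have : 0 < (-a * b - d) * u ^ 2 := mul_pos (by linarith) (by positivity)
    refine mem_slitPlane_iff.2 (Or.inl ?_)
    rw [Q_re]
    exact div_pos this (normSq_pos.2 (P_ne_zero u))

lemma Q_ne_zero (hd : d < -a * b) (u : ℝ) : Q a b d u ≠ 0 :=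
  slitPlane_ne_zero (Q_mem_slitPlane hd u)

lemma G_ne_zero (hd : d < -a * b) (u : ℝ) : G a b d u ≠ 0 := by
  rw [G_eq_neg_P_mul_Q]
  exact neg_ne_zero.2 (mul_ne_zero (P_ne_zero u) (Q_ne_zero hd u))

lemma contDiff_G : ContDiff ℝ 1 (G a b d) := by
  have hsqrt : ContDiff ℝ 1 fun u : ℝ => √(2 * u ^ 2 + 1) :=
    (by fun_prop : ContDiff ℝ 1 fun u : ℝ => 2 * u ^ 2 + 1).sqrt fun u => by positivity
  have hofReal : ContDiff ℝ 1 ((↑) : ℝ → ℂ) := ofRealCLM.contDiff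
  unfold G
  fun_prop

lemma contDiff_P : ContDiff ℝ 1 (P b) := by
  have hofReal : ContDiff ℝ 1 ((↑) : ℝ → ℂ) := ofRealCLM.contDiff
  unfold P
  fun_prop

lemma contDiff_Q : ContDiff ℝ 1 (Q a b d) :=
  contDiff_G.neg.mul (contDiff_P.inv P_ne_zero)


noncomputable def liftedArg (a b d u : ℝ) : ℝ := arg (P b u) + arg (Q a b d u)

lemma integral_eq_liftedArg (hd : d < -a * b) (s t : ℝ) :
    ∫ u in s..t,
        deriv (fun u => G a b d u / conj (G a b d u)) u / (G a b d u / conj (G a b d u))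
      = 2 * I * (liftedArg a b d t - liftedArg a b d s) := by
  have hL : ContDiff ℝ 1 fun u => log (P b u) + log (Q a b d u) :=
    (contDiff_P.clog_real P_mem_slitPlane).add (contDiff_Q.clog_real (Q_mem_slitPlane hd))
  have hF : ∀ u, P b u * Q a b d u = exp (log (P b u) + log (Q a b d u)) := fun u => by
    rw [exp_add, exp_log (P_ne_zero u), exp_log (Q_ne_zero hd u)]
  have hS : (fun u => G a b d u / conj (G a b d u))
      = fun u => P b u * Q a b d u / conj (P b u * Q a b d u) := by
    simp only [G_eq_neg_P_mul_Q, map_neg, neg_div_neg_eq]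
  rw [integral_deriv_div_self_of_eq_div_conj hL hF hS]
  push_cast [add_im, log_im, liftedArg]
  ring

lemma G_neg (u : ℝ) : G a b d (-u) = G (-a) (-b) d u := by
  simp only [G, neg_sq]
  push_cast
  ring

lemma P_neg (u : ℝ) : P b (-u) = P (-b) u := by
  simp only [P]
  push_cast
  ring

lemma liftedArg_neg (u : ℝ) : liftedArg a b d (-u) = liftedArg (-a) (-b) d u := by
  simp only [liftedArg, Q, G_neg, P_neg]

lemma tendsto_P_div : Tendsto (fun T : ℝ => P b T / T) atTop (𝓝 (b * I)) := by
  have h : Tendsto (fun T : ℝ => ((T⁻¹ : ℝ) : ℂ) + b * I) atTop (𝓝 (((0 : ℝ) : ℂ) + b * I)) :=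
    (tendsto_ofReal_iff.2 tendsto_inv_atTop_zero).add_const _
  rw [ofReal_zero, zero_add] at h
  refine h.congr' ?_
  filter_upwards [eventually_gt_atTop 0] with T hT
  have : (T : ℂ) ≠ 0 := ofReal_ne_zero.2 hT.ne'
  simp only [P]
  push_cast
  field_simp

lemma tendsto_G_div_sq :
    Tendsto (fun T : ℝ => G a b d T / (T : ℂ) ^ 2) atTop (𝓝 (d + b * √2 : ℝ)) := by
  have hre : Tendsto (fun T : ℝ => d + b * (√(2 * T ^ 2 + 1) / T)) atTop (𝓝 (d + b * √2)) :=
    (tendsto_sqrt_two_mul_sq_add_one_div.const_mul b).const_add d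
  have him : Tendsto (fun T : ℝ => (a - √(2 * T ^ 2 + 1) / T) * T⁻¹) atTop (𝓝 0) := by
    simpa using (tendsto_sqrt_two_mul_sq_add_one_div.const_sub a).mul tendsto_inv_atTop_zero
  have h := (tendsto_ofReal_iff.2 hre).add ((tendsto_ofReal_iff.2 him).const_mul I)
  rw [ofReal_zero, mul_zero, add_zero] at h
  refine h.congr' ?_
  filter_upwards [eventually_gt_atTop 0] with T hT
  have : (T : ℂ) ≠ 0 := ofReal_ne_zero.2 hT.ne'
  simp only [G]
  push_cast
  field_simp

lemma tendsto_Q_div (hb : b ≠ 0) :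
    Tendsto (fun T : ℝ => Q a b d T / T) atTop (𝓝 (((d + b * √2) / b : ℝ) * I)) := by
  have hbI : (b : ℂ) * I ≠ 0 := mul_ne_zero (ofReal_ne_zero.2 hb) I_ne_zero
  have h := (tendsto_G_div_sq (a := a) (b := b) (d := d)).neg.div tendsto_P_div hbI
  rw [show -((d + b * √2 : ℝ) : ℂ) / (b * I) = ((d + b * √2) / b : ℝ) * I by
    push_cast; field_simp; rw [I_sq]; ring] at h
  refine h.congr' ?_
  filter_upwards [eventually_gt_atTop 0] with T hT
  have : (T : ℂ) ≠ 0 := ofReal_ne_zero.2 hT.ne'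
  have := P_ne_zero (b := b) T
  simp only [Q, Pi.div_apply]
  field_simp

lemma ofReal_mul_I_mem_slitPlane {x : ℝ} (hx : x ≠ 0) : (x : ℂ) * I ∈ slitPlane := by
  simp [mem_slitPlane_iff, hx]

lemma tendsto_liftedArg (hd : d < -a * b) (hm : d + b * √2 ≠ 0) :
    Tendsto (liftedArg a b d) atTop (𝓝 (π / 2 * Real.sign b * (1 + Real.sign (d + b * √2)))) := by
  rcases eq_or_ne b 0 with rfl | hb
  · have hG := (tendsto_G_div_sq (a := a) (b := 0) (d := d)).neg
    rw [zero_mul, add_zero, ← ofReal_neg] at hG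
    rw [mul_zero] at hd
    have hQ := tendsto_arg_of_tendsto_div_ofReal (f := Q a 0 d) (g := fun T : ℝ => T ^ 2)
      (ofReal_mem_slitPlane.2 (neg_pos.2 hd))
      ((eventually_gt_atTop 0).mono fun T hT => by positivity)
      (hG.congr fun T => by simp [Q, P, neg_div])
    rw [arg_ofReal_of_nonneg (neg_pos.2 hd).le] at hQ
    have hP : ∀ T, P 0 T = 1 := fun T => by simp [P]
    simp only [Real.sign_zero, mul_zero, zero_mul]
    exact hQ.congr fun T => by simp [liftedArg, hP]
  · have hP := tendsto_arg_of_tendsto_div_ofReal (ofReal_mul_I_mem_slitPlane hb)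
      (eventually_gt_atTop 0) tendsto_P_div
    have hQ := tendsto_arg_of_tendsto_div_ofReal (ofReal_mul_I_mem_slitPlane (div_ne_zero hm hb))
      (eventually_gt_atTop 0) (tendsto_Q_div (a := a) hb)
    rw [arg_ofReal_mul_I] at hP hQ
    convert hP.add hQ using 2
    · rfl
    · rw [div_eq_mul_inv (d + b * √2), Real.sign_mul, Real.sign_inv]
      ring

lemma tendsto_integral {S : ℝ → ℂ} (hS : S = fun u => G a b d u / conj (G a b d u))
    (hd : d < -a * b) (hm : d + b * √2 ≠ 0) (hp : d - b * √2 ≠ 0) :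
    Tendsto (fun T : ℝ => ∫ u in (-T)..T, deriv S u / S u) atTop
      (𝓝 (2 * π * I *
        ((Real.sign b * (2 + Real.sign (d + b * √2) + Real.sign (d - b * √2)) / 2 : ℝ) : ℂ))) := by
  have hplus := tendsto_liftedArg hd hm
  have hminus := tendsto_liftedArg (a := -a) (b := -b) (by rwa [neg_mul_neg])
    (by rwa [neg_mul, ← sub_eq_add_neg])
  rw [Real.sign_neg, neg_mul, ← sub_eq_add_neg] at hminus
  have h := (tendsto_ofReal_iff.2 (hplus.sub hminus)).const_mul (2 * I)
  subst hS
  simp only [integral_eq_liftedArg hd, liftedArg_neg, ← ofReal_sub]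
  convert h using 2
  push_cast
  ring

lemma sign_eq_sign_of_mul_neg {b Bp Bm : ℝ} (hB : Bp - Bm = 2 * √2 * b) (h : Bp * Bm < 0) :
    Real.sign b = Real.sign Bp ∧ Real.sign Bm = -Real.sign Bp := by
  have hsqrt : 0 < √2 := by positivity
  rcases mul_neg_iff.1 h with ⟨hp, hm⟩ | ⟨hp, hm⟩
  · have hb : 0 < b := by nlinarith
    simp [Real.sign_of_pos, Real.sign_of_neg, hp, hm, hb]
  · have hb : b < 0 := by nlinarith
    simp [Real.sign_of_pos, Real.sign_of_neg, hp, hm, hb]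

lemma sq_gt_two_and_sign_eq {a b c : ℝ} (hc : 0 < c) (hp : b * (a + √2) + c < 0)
    (hm : b * (a - √2) + c < 0) : 2 < a ^ 2 ∧ Real.sign (√2 - a) = Real.sign b := by
  have hsqrt : √2 ^ 2 = 2 := Real.sq_sqrt zero_le_two
  have hsqrt_pos : 0 < √2 := by positivity
  rcases lt_trichotomy b 0 with hb | rfl | hb
  · have ha : √2 < a := by nlinarith
    exact ⟨by nlinarith, by rw [Real.sign_of_neg (by linarith), Real.sign_of_neg hb]⟩
  · linarith
  · have ha : a < -√2 := by nlinarith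
    exact ⟨by nlinarith, by rw [Real.sign_of_pos (by linarith), Real.sign_of_pos hb]⟩

end BoundaryWinding

/-- Total winding for class `𝔄_{3,4}` with `b₁₂ ≠ 0` (here `c = |b₁₂|²`): the winding
number is `sign(B₊)` if `B₊B₋ < 0`, `0` if both are positive, and `±2` (a ghost charge)
if both are negative. -/
theorem stmt18 (β₁ β₂ c : ℝ) (hc : 0 < c)
    (d Bp Bm : ℝ)
    (hd : d = -β₁ * β₂ - c)
    (hBp : Bp = β₂ * (β₁ + Real.sqrt 2) + c)
    (hBm : Bm = β₂ * (β₁ - Real.sqrt 2) + c)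
    (hBp0 : Bp ≠ 0) (hBm0 : Bm ≠ 0)
    (G : ℝ → ℂ)
    (hG : G = fun u : ℝ => ((d * u ^ 2 + β₂ * u * Real.sqrt (2 * u ^ 2 + 1) : ℝ) : ℂ)
      + Complex.I * ((β₁ * u - Real.sqrt (2 * u ^ 2 + 1) : ℝ) : ℂ))
    (S : ℝ → ℂ) (hS : S = fun u => G u / (starRingEnd ℂ) (G u)) :
    (∀ u : ℝ, G u ≠ 0) ∧
    (Bp * Bm < 0 →
      Tendsto (fun T : ℝ => ∫ u in (-T)..T, deriv S u / S u) atTop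
        (nhds (2 * Real.pi * Complex.I * ((Real.sign Bp : ℝ) : ℂ)))) ∧
    (0 < Bp → 0 < Bm →
      Tendsto (fun T : ℝ => ∫ u in (-T)..T, deriv S u / S u) atTop (nhds 0)) ∧
    (Bp < 0 → Bm < 0 → β₁ ^ 2 > 2 ∧
      Tendsto (fun T : ℝ => ∫ u in (-T)..T, deriv S u / S u) atTop
        (nhds (2 * Real.pi * Complex.I * ((2 * Real.sign (Real.sqrt 2 - β₁) : ℝ) : ℂ)))) := by
  have hdb : d < -β₁ * β₂ := by linarith
  have hm : d + β₂ * √2 = -Bm := by rw [hd, hBm]; ring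
  have hp : d - β₂ * √2 = -Bp := by rw [hd, hBp]; ring
  have hG' : G = BoundaryWinding.G β₁ β₂ d := hG
  have hlim := BoundaryWinding.tendsto_integral (hG' ▸ hS) hdb (hm ▸ neg_ne_zero.2 hBm0)
    (hp ▸ neg_ne_zero.2 hBp0)
  rw [hm, hp, Real.sign_neg, Real.sign_neg] at hlim
  refine ⟨hG' ▸ BoundaryWinding.G_ne_zero hdb, fun hmix => ?_, fun hBp_pos hBm_pos => ?_,
    fun hBp_neg hBm_neg => ?_⟩
  · obtain ⟨hsignβ₂, hsignBm⟩ :=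
      BoundaryWinding.sign_eq_sign_of_mul_neg (by rw [hBp, hBm]; ring) hmix
    convert hlim using 4
    rw [hsignβ₂, hsignBm]
    ring
  · rw [Real.sign_of_pos hBp_pos, Real.sign_of_pos hBm_pos] at hlim
    norm_num at hlim
    exact hlim
  · obtain ⟨hβ₁, hsign⟩ := BoundaryWinding.sq_gt_two_and_sign_eq hc (hBp ▸ hBp_neg) (hBm ▸ hBm_neg)
    refine ⟨hβ₁, ?_⟩
    convert hlim using 4
    rw [hsign, Real.sign_of_neg hBp_neg, Real.sign_of_neg hBm_neg]
    ring
end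

section
/- Let m > 0 and ε > 0. Define d : ℝ² → ℝ³ by d(k₁, k₂) = (−k₁, −k₂, m − ε(k₁² + k₂²)), which never vanishes, and set e = d/‖d‖ : ℝ² → ℝ³ (taking values in the unit sphere). Then the function (k₁, k₂) ↦ e(k₁, k₂) · ( ∂_{k₁}e(k₁, k₂) × ∂_{k₂}e(k₁, k₂) ) is integrable on ℝ² and ∫_{ℝ²} e · (∂_{k₁}e × ∂_{k₂}e) dk₁ dk₂ = 4π; equivalently, the Chern number C₊ = (1/4π) ∫_{ℝ²} e · (∂₁e × ∂₂e) of the upper band of the massive regularized Dirac Hamiltonian equals 1 = (sign(m) + sign(ε))/2. -/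
open Matrix MeasureTheory Set Filter Topology
open scoped Real

/-!
Writing `e = φ • d` with `φ = ‖d‖⁻¹`, every term of `e · (∂₁e × ∂₂e)` containing a
derivative of `φ` has a repeated factor `d` in a triple product, so
`e · (∂₁e × ∂₂e) = d · (∂₁d × ∂₂d) / ‖d‖³`, which for the regularized Dirac vector is the
radial function `(m + ε|k|²) / ‖d‖³`. In polar coordinates the integral becomes
`2π ∫₀^∞ r (m + ε r²) / ‖d‖³ dr`, and the radial integrand is the derivative of
`-e₃ = (ε r² - m) / ‖d‖`, which increases from `-1` at `r = 0` to `1` at `r = ∞`: the Bloch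
vector sweeps the sphere once from pole to pole, and the integral is `2π · 2 = 4π`.
-/

theorem smul_dotProduct_cross_add_smul {R : Type*} [CommRing R] (a b c : R) (v x y : Fin 3 → R) :
    (a • v) ⬝ᵥ (a • x + b • v) ⨯₃ (a • y + c • v) = a ^ 3 * (v ⬝ᵥ x ⨯₃ y) := by
  simp only [map_add, map_smul, LinearMap.add_apply, LinearMap.smul_apply, smul_add,
    dotProduct_add, smul_dotProduct, dotProduct_smul, cross_self, dot_self_cross, dot_cross_self,
    smul_zero, add_zero, smul_eq_mul]
  ring

section Normalization

variable {E : Type*} [NormedAddCommGroup E] [NormedSpace ℝ E] {x : E} {D : E → Fin 3 → ℝ}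

theorem smul_dotProduct_cross_fderiv_smul {φ : E → ℝ} (hφ : DifferentiableAt ℝ φ x)
    (hD : DifferentiableAt ℝ D x) (u v : E) :
    (φ x • D x) ⬝ᵥ fderiv ℝ (fun y => φ y • D y) x u ⨯₃ fderiv ℝ (fun y => φ y • D y) x v =
      φ x ^ 3 * (D x ⬝ᵥ fderiv ℝ D x u ⨯₃ fderiv ℝ D x v) := by
  rw [fderiv_fun_smul hφ hD]
  simpa [add_comm] using
    smul_dotProduct_cross_add_smul (φ x) (fderiv ℝ φ x u) (fderiv ℝ φ x v) (D x) _ _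

theorem DifferentiableAt.inv_sqrt_dotProduct_self (hD : DifferentiableAt ℝ D x) (hx : D x ≠ 0) :
    DifferentiableAt ℝ (fun y => (√(D y ⬝ᵥ D y))⁻¹) x := by
  have hpos : 0 < D x ⬝ᵥ D x :=
    (by simpa using dotProduct_star_self_nonneg (D x) : 0 ≤ D x ⬝ᵥ D x).lt_of_ne'
      (dotProduct_self_eq_zero.not.2 hx)
  have hdot : DifferentiableAt ℝ (fun y => D y ⬝ᵥ D y) x := by
    simp only [dotProduct]
    fun_prop
  exact (hdot.sqrt hpos.ne').inv (Real.sqrt_pos.2 hpos).ne'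

end Normalization

section PolarCoord

variable {E : Type*} [NormedAddCommGroup E] [NormedSpace ℝ E]

theorem integrable_iff_integrableOn_polarCoord_target (f : ℝ × ℝ → E) :
    Integrable f ↔ IntegrableOn (fun p => p.1 • f (polarCoord.symm p)) polarCoord.target := by
  have hinj : InjOn polarCoord.symm polarCoord.target := by
    simpa only [polarCoord.symm_source] using polarCoord.symm.injOn
  calc Integrable f ↔ IntegrableOn f polarCoord.source := by
        rw [IntegrableOn, Measure.restrict_congr_set polarCoord_source_ae_eq_univ,
          Measure.restrict_univ]
    _ ↔ IntegrableOn (fun p => |(fderivPolarCoordSymm p).det| • f (polarCoord.symm p))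
          polarCoord.target := by
        rw [← polarCoord.symm_image_target_eq_source]
        exact integrableOn_image_iff_integrableOn_abs_det_fderiv_smul volume
          polarCoord.open_target.measurableSet
          (fun p _ => (hasFDerivAt_polarCoord_symm p).hasFDerivWithinAt) hinj f
    _ ↔ IntegrableOn (fun p => p.1 • f (polarCoord.symm p)) polarCoord.target := by
        refine integrableOn_congr_fun (fun p hp => ?_) polarCoord.open_target.measurableSet
        rw [det_fderivPolarCoordSymm, abs_of_pos hp.1]

theorem polarCoord_symm_fst_sq_add_snd_sq (p : ℝ × ℝ) :
    (polarCoord.symm p).1 ^ 2 + (polarCoord.symm p).2 ^ 2 = p.1 ^ 2 := by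
  simp only [polarCoord_symm_apply]
  linear_combination p.1 ^ 2 * Real.cos_sq_add_sin_sq p.2

theorem integrable_comp_sq_add_sq {h : ℝ → E}
    (hh : IntegrableOn (fun r => r • h (r ^ 2)) (Ioi 0)) :
    Integrable fun k : ℝ × ℝ => h (k.1 ^ 2 + k.2 ^ 2) := by
  have : IsFiniteMeasure (volume.restrict (Ioo (-π) π)) :=
    isFiniteMeasure_restrict.2 measure_Ioo_lt_top.ne
  rw [integrable_iff_integrableOn_polarCoord_target]
  simp only [polarCoord_symm_fst_sq_add_snd_sq, polarCoord_target]
  rw [IntegrableOn, Measure.volume_eq_prod, ← Measure.prod_restrict]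
  exact hh.comp_fst _

theorem integral_comp_sq_add_sq (h : ℝ → E) :
    ∫ k : ℝ × ℝ, h (k.1 ^ 2 + k.2 ^ 2) = (2 * π) • ∫ r in Ioi 0, r • h (r ^ 2) := by
  rw [← integral_comp_polarCoord_symm]
  simp only [polarCoord_symm_fst_sq_add_snd_sq, polarCoord_target]
  rw [Measure.volume_eq_prod, ← Measure.prod_restrict, integral_fun_fst (fun r => r • h (r ^ 2)),
    measureReal_restrict_apply_univ, Real.volume_real_Ioo_of_le (by linarith [Real.pi_pos])]
  ring_nf

end PolarCoord

def regDirac (m ε : ℝ) : ℝ × ℝ → Fin 3 → ℝ :=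
  fun k => ![-k.1, -k.2, m - ε * (k.1 ^ 2 + k.2 ^ 2)]

noncomputable def blochVector (m ε : ℝ) : ℝ × ℝ → Fin 3 → ℝ :=
  fun k => (√(regDirac m ε k ⬝ᵥ regDirac m ε k))⁻¹ • regDirac m ε k

noncomputable def chernDensity (m ε s : ℝ) : ℝ := (√(s + (m - ε * s) ^ 2))⁻¹ ^ 3 * (m + ε * s)

section RegDirac

variable {m ε : ℝ}

theorem regDirac_dotProduct_self (k : ℝ × ℝ) :
    regDirac m ε k ⬝ᵥ regDirac m ε k =
      k.1 ^ 2 + k.2 ^ 2 + (m - ε * (k.1 ^ 2 + k.2 ^ 2)) ^ 2 := by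
  simp only [regDirac, dotProduct, Fin.sum_univ_three, cons_val_zero, cons_val_one, cons_val_two,
    head_cons, tail_cons]
  ring

theorem regDirac_ne_zero (hm : m ≠ 0) (k : ℝ × ℝ) : regDirac m ε k ≠ 0 := by
  intro h
  have h0 : k.1 = 0 := by simpa [regDirac] using congrFun h 0
  have h1 : k.2 = 0 := by simpa [regDirac] using congrFun h 1
  have h2 := congrFun h 2
  simp [regDirac, h0, h1, hm] at h2

theorem differentiable_regDirac : Differentiable ℝ (regDirac m ε) := by
  intro k
  refine differentiableAt_pi.2 fun i => ?_
  fin_cases i <;> simp only [regDirac, Fin.zero_eta, Fin.mk_one, Fin.reduceFinMk, cons_val] <;>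
    fun_prop
theorem fderiv_regDirac_apply (k v : ℝ × ℝ) :
    fderiv ℝ (regDirac m ε) k v = ![-v.1, -v.2, -(2 * ε * (k.1 * v.1 + k.2 * v.2))] := by
  have hthird : HasFDerivAt (fun k : ℝ × ℝ => m - ε * (k.1 ^ 2 + k.2 ^ 2)) _ k :=
    ((((hasFDerivAt_fst (𝕜 := ℝ) (p := k)).pow 2).add
      ((hasFDerivAt_snd (𝕜 := ℝ) (p := k)).pow 2)).const_mul ε).const_sub m
  change fderiv ℝ (fun k i => regDirac m ε k i) k v = _
  rw [fderiv_pi fun i => differentiableAt_pi.1 (differentiable_regDirac k) i]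
  ext i
  unfold regDirac
  fin_cases i
  · simp [fderiv_fst]
  · simp [fderiv_snd]
  · simp only [Fin.reduceFinMk, ContinuousLinearMap.coe_pi', cons_val, hthird.fderiv, nsmul_eq_mul,
      _root_.neg_apply, _root_.smul_apply, _root_.add_apply, ContinuousLinearMap.coe_fst',
      ContinuousLinearMap.coe_snd', smul_eq_mul]
    ring

theorem regDirac_dotProduct_cross_fderiv (k : ℝ × ℝ) :
    regDirac m ε k ⬝ᵥ fderiv ℝ (regDirac m ε) k (1, 0) ⨯₃ fderiv ℝ (regDirac m ε) k (0, 1) =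
      m + ε * (k.1 ^ 2 + k.2 ^ 2) := by
  simp only [fderiv_regDirac_apply, regDirac, cross_apply, dotProduct, Fin.sum_univ_three,
    cons_val_zero, cons_val_one, cons_val_two, head_cons, tail_cons]
  ring

theorem blochVector_dotProduct_cross_fderiv (hm : m ≠ 0) (k : ℝ × ℝ) :
    blochVector m ε k ⬝ᵥ
        fderiv ℝ (blochVector m ε) k (1, 0) ⨯₃ fderiv ℝ (blochVector m ε) k (0, 1) =
      chernDensity m ε (k.1 ^ 2 + k.2 ^ 2) := by
  unfold blochVector
  rw [smul_dotProduct_cross_fderiv_smul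
      ((differentiable_regDirac k).inv_sqrt_dotProduct_self (regDirac_ne_zero hm k))
      (differentiable_regDirac k), regDirac_dotProduct_cross_fderiv, regDirac_dotProduct_self,
    chernDensity]

end RegDirac

noncomputable def chernPotential (m ε r : ℝ) : ℝ :=
  (ε * r ^ 2 - m) * (√(r ^ 2 + (m - ε * r ^ 2) ^ 2))⁻¹

section Radial

variable {m ε : ℝ}

theorem sq_add_sub_mul_sq_pos (hm : m ≠ 0) (r : ℝ) : 0 < r ^ 2 + (m - ε * r ^ 2) ^ 2 := by
  rcases eq_or_ne r 0 with rfl | hr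
  · simpa using sq_pos_of_ne_zero hm
  · positivity

theorem hasDerivAt_chernPotential (hm : m ≠ 0) (r : ℝ) :
    HasDerivAt (chernPotential m ε) (r * chernDensity m ε (r ^ 2)) r := by
  have hP := sq_add_sub_mul_sq_pos (ε := ε) hm r
  have hsqrt : 0 < √(r ^ 2 + (m - ε * r ^ 2) ^ 2) := Real.sqrt_pos.2 hP
  have hP' : HasDerivAt (fun r => r ^ 2 + (m - ε * r ^ 2) ^ 2)
      (2 * r + 2 * (m - ε * r ^ 2) * -(ε * (2 * r))) r := by
    simpa using (hasDerivAt_pow 2 r).fun_add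
      ((((hasDerivAt_pow 2 r).const_mul ε).const_sub m).fun_pow 2)
  have hN : HasDerivAt (fun r => ε * r ^ 2 - m) (ε * (2 * r)) r := by
    simpa using ((hasDerivAt_pow 2 r).const_mul ε).sub_const m
  refine (hN.mul ((hP'.sqrt hP.ne').inv hsqrt.ne')).congr_deriv ?_
  simp only [chernDensity, Pi.inv_apply]
  field_simp
  linear_combination (2 * r * ε) * Real.sq_sqrt hP.le

theorem tendsto_chernPotential_atTop (hε : 0 < ε) :
    Tendsto (chernPotential m ε) atTop (𝓝 1) := by
  -- in the variable `u = r⁻²` the potential extends continuously to `u = 0`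
  set φ : ℝ → ℝ := fun u => (ε - m * u) * (√(u + (m * u - ε) ^ 2))⁻¹
  have hφ : ContinuousAt φ 0 := by
    have : √((0 : ℝ) + (m * 0 - ε) ^ 2) ≠ 0 := by simp [Real.sqrt_sq hε.le, hε.ne']
    fun_prop (disch := exact this)
  have hφ0 : φ 0 = 1 := by simp [φ, Real.sqrt_sq hε.le, hε.ne']
  have hu : Tendsto (fun r : ℝ => (r ^ 2)⁻¹) atTop (𝓝 0) :=
    tendsto_inv_atTop_zero.comp (tendsto_pow_atTop two_ne_zero)
  refine (hφ0 ▸ hφ.tendsto.comp hu).congr' ?_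
  filter_upwards [eventually_gt_atTop 0] with r hr
  have hr2 : 0 < r ^ 2 := by positivity
  have hrescale : (r ^ 2)⁻¹ + (m * (r ^ 2)⁻¹ - ε) ^ 2 =
      (r ^ 2 + (m - ε * r ^ 2) ^ 2) / (r ^ 2) ^ 2 := by
    field_simp
  simp only [Function.comp_apply, φ, chernPotential, hrescale, Real.sqrt_div' _ (sq_nonneg _),
    Real.sqrt_sq hr2.le]
  field_simp

theorem chernPotential_zero (hm : 0 < m) : chernPotential m ε 0 = -1 := by
  simp [chernPotential, Real.sqrt_sq hm.le, hm.ne']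

theorem mul_chernDensity_sq_nonneg (hm : 0 ≤ m) (hε : 0 ≤ ε) {r : ℝ} (hr : 0 ≤ r) :
    0 ≤ r * chernDensity m ε (r ^ 2) := by
  unfold chernDensity
  positivity

theorem integrableOn_mul_chernDensity_sq (hm : 0 < m) (hε : 0 < ε) :
    IntegrableOn (fun r => r * chernDensity m ε (r ^ 2)) (Ioi 0) :=
  integrableOn_Ioi_deriv_of_nonneg' (fun r _ => hasDerivAt_chernPotential hm.ne' r)
    (fun _ hr => mul_chernDensity_sq_nonneg hm.le hε.le (le_of_lt hr))
    (tendsto_chernPotential_atTop hε)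

theorem integral_mul_chernDensity_sq (hm : 0 < m) (hε : 0 < ε) :
    ∫ r in Ioi 0, r * chernDensity m ε (r ^ 2) = 2 := by
  rw [integral_Ioi_of_hasDerivAt_of_nonneg' (fun r _ => hasDerivAt_chernPotential hm.ne' r)
    (fun _ hr => mul_chernDensity_sq_nonneg hm.le hε.le (le_of_lt hr))
    (tendsto_chernPotential_atTop hε), chernPotential_zero hm]
  norm_num

end Radial

/-- The Chern number of the upper band of the massive regularized Dirac Hamiltonian:
`(1/4π) ∫_{ℝ²} e · (∂₁e × ∂₂e) = 1 = (sign m + sign ε)/2` for `m, ε > 0`. -/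
theorem stmt19 (m ε : ℝ) (hm : 0 < m) (hε : 0 < ε)
    (d : ℝ × ℝ → Fin 3 → ℝ)
    (hd : d = fun k => ![-k.1, -k.2, m - ε * (k.1 ^ 2 + k.2 ^ 2)])
    (e : ℝ × ℝ → Fin 3 → ℝ)
    (he : e = fun k => (Real.sqrt (d k ⬝ᵥ d k))⁻¹ • d k)
    (f : ℝ × ℝ → ℝ)
    (hf : f = fun k => e k ⬝ᵥ crossProduct (fderiv ℝ e k (1, 0)) (fderiv ℝ e k (0, 1))) :
    (∀ k : ℝ × ℝ, d k ≠ 0) ∧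
    Integrable f ∧
    (∫ k : ℝ × ℝ, f k) = 4 * Real.pi ∧
    (1 / (4 * Real.pi)) * (∫ k : ℝ × ℝ, f k) = (Real.sign m + Real.sign ε) / 2 := by
  obtain rfl : d = regDirac m ε := hd
  obtain rfl : e = blochVector m ε := he
  have hf' : f = fun k => chernDensity m ε (k.1 ^ 2 + k.2 ^ 2) := by
    rw [hf]
    exact funext (blochVector_dotProduct_cross_fderiv hm.ne')
  have hintegral : ∫ k, f k = 4 * π := by
    rw [hf', integral_comp_sq_add_sq]
    simp only [smul_eq_mul, integral_mul_chernDensity_sq hm hε]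
    ring
  refine ⟨regDirac_ne_zero hm.ne',
    hf' ▸ integrable_comp_sq_add_sq (integrableOn_mul_chernDensity_sq hm hε), hintegral, ?_⟩
  rw [hintegral, Real.sign_of_pos hm, Real.sign_of_pos hε]
  field_simp
  norm_num
end
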